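/- arXiv:1411.1797 — 7 statements merged into one kernel-verified Lean document; each statement's English description precedes it below -/
import Mathlib

section
/- For every natural number r ≥ 1, in F_2[x] one has (1 + x^(2^r − 1) + x^(2^r)) · (∏_{j=0}^{r−1} (1 + x^((2^r − 1)·2^j) + x^(2^r·2^j)) + x^(4^r − 2^r)) = 1 + x^(4^r − 1). -/
open Polynomial Finset

theorem stmt_6 (r : ℕ) (hr : 1 ≤ r) :
    ((1 + X ^ (2 ^ r - 1) + X ^ (2 ^ r) : Polynomial (ZMod 2)) *
      ((∏ j ∈ Finset.range r, (1 + X ^ ((2 ^ r - 1) * 2 ^ j) + X ^ (2 ^ r * 2 ^ j)))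
        + X ^ (4 ^ r - 2 ^ r)))
    = 1 + X ^ (4 ^ r - 1) := by
  have hq1 : 1 ≤ 2 ^ r := Nat.one_le_two_pow
  set q := 2 ^ r with hq
  clear_value q
  have h4 : 4 ^ r = q * q := by
    rw [hq, ← pow_add, show (4:ℕ) = 2 ^ 2 from rfl, ← pow_mul, two_mul]
  have hfrob : ∀ n : ℕ, ((1 : Polynomial (ZMod 2)) + X ^ (q - 1) + X ^ q) ^ (2 ^ n)
      = 1 + X ^ ((q - 1) * 2 ^ n) + X ^ (q * 2 ^ n) := by
    intro n
    rw [add_pow_char_pow, add_pow_char_pow, one_pow, ← pow_mul, ← pow_mul]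
  have hprod : (∏ j ∈ Finset.range r, ((1 : Polynomial (ZMod 2)) + X ^ ((q - 1) * 2 ^ j) + X ^ (q * 2 ^ j)))
      = ((1 : Polynomial (ZMod 2)) + X ^ (q - 1) + X ^ q) ^ (q - 1) := by
    have hsum : ∀ n : ℕ, ∑ j ∈ Finset.range n, 2 ^ j = 2 ^ n - 1 := by
      intro n
      induction n with
      | zero => simp
      | succ m ih =>
        rw [Finset.sum_range_succ, ih]
        have := Nat.one_le_two_pow (n := m)
        rw [pow_succ]
        omega
    rw [← Finset.prod_congr rfl fun j _ => (hfrob j), Finset.prod_pow_eq_pow_sum, hsum, hq]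
  rw [hprod, mul_add, ← pow_succ']
  have hfq := hfrob r
  rw [← hq] at hfq
  rw [Nat.sub_add_cancel hq1, hfq]
  have hqq : q ≤ q * q := Nat.le_mul_of_pos_left q (by omega)
  have e1 : (q - 1) * q = q * q - q := by rw [Nat.sub_mul, one_mul]
  have e2 : (q - 1) + (q * q - q) = q * q - 1 := by
    rw [add_comm]; exact tsub_add_tsub_cancel hqq hq1
  have e3 : q + (q * q - q) = q * q := Nat.add_sub_cancel' hqq
  have h2 : (2 : Polynomial (ZMod 2)) = 0 := by
    simpa using CharP.cast_eq_zero (Polynomial (ZMod 2)) 2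
  rw [h4, e1, add_mul, add_mul, one_mul, ← pow_add, ← pow_add, e2, e3]
  linear_combination (X ^ (q * q - q) + X ^ (q * q) : Polynomial (ZMod 2)) * h2
end

section
/- For r ≥ 1, the polynomial f_{r,1}(x) = 1 + x + x^(2^r − 1) + x^(2^r + 1) in F_2[x] divides 1 + x^(4^r − 1). -/
open Polynomial

theorem stmt_11 (r : ℕ) (hr : 1 ≤ r) :
    (1 + X + X ^ (2 ^ r - 1) + X ^ (2 ^ r + 1) : Polynomial (ZMod 2))
      ∣ 1 + X ^ (4 ^ r - 1) := by
  have hq2 : 2 ≤ 2 ^ r := by calc 2 = 2^1 := rfl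
                                  _ ≤ 2^r := Nat.pow_le_pow_right (by norm_num) hr
  obtain ⟨m, hm⟩ : ∃ m, 2 ^ r = m + 2 := ⟨2 ^ r - 2, by omega⟩
  set q := 2 ^ r with hqdef
  have h4 : 4 ^ r = q * q := by rw [hqdef, ← pow_add, ← two_mul, pow_mul]; norm_num
  have two_zero : (2 : Polynomial (ZMod 2)) = 0 := by
    exact_mod_cast CharP.cast_eq_zero (Polynomial (ZMod 2)) 2
  set g : Polynomial (ZMod 2) := 1 + X ^ (q - 1) + X ^ q with hg
  set p : Polynomial (ZMod 2) := X ^ q + X + 1 with hp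
  -- factorization
  have hfact : (1 + X + X ^ (q - 1) + X ^ (q + 1) : Polynomial (ZMod 2)) = (1 + X) * g := by
    rw [hg, hm]
    have h1 : m + 2 - 1 = m + 1 := by omega
    rw [h1]
    linear_combination (-(X : Polynomial (ZMod 2)) ^ (m + 2)) * two_zero
  -- p divides X^(q*q) + X
  have hpd : p ∣ X ^ (q * q) + X := by
    have h1 : (X : Polynomial (ZMod 2)) ^ q - (X + 1) ∣ (X ^ q) ^ q - (X + 1) ^ q :=
      sub_dvd_pow_sub_pow _ _ q
    have h2 : ((X : Polynomial (ZMod 2)) + 1) ^ q = X ^ q + 1 := by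
      rw [hqdef, add_pow_char_pow]
      simp
    rw [h2, ← pow_mul] at h1
    have h3 : (X : Polynomial (ZMod 2)) ^ q - (X + 1) = p := by
      rw [hp]; linear_combination (-1-(X:Polynomial (ZMod 2))) * two_zero
    rw [h3] at h1
    obtain ⟨c, hc⟩ := h1
    exact ⟨c + 1, by linear_combination hc⟩
  -- strip X: p ∣ X^(q*q-1) + 1
  have hcop : IsCoprime (X : Polynomial (ZMod 2)) p := by
    refine ⟨X ^ (q-1) + 1, 1, ?_⟩
    rw [hp]
    have hx : (X : Polynomial (ZMod 2)) ^ (q - 1) * X = X ^ q := by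
      rw [← pow_succ]
      congr 1
      omega
    linear_combination hx + ((X:Polynomial (ZMod 2))^q + X) * two_zero
  have hpd2 : p ∣ X ^ (q * q - 1) + 1 := by
    apply (hcop.symm).dvd_of_dvd_mul_left
    have : (X : Polynomial (ZMod 2)) * (X ^ (q*q-1) + 1) = X ^ (q*q) + X := by
      have h1q : 1 ≤ q * q := Nat.mul_pos (by omega) (by omega)
      rw [mul_add, mul_one, ← pow_succ']
      congr 2
      omega
    rw [this]; exact hpd
  -- reverse: g ∣ X^(q*q-1)+1
  have hA : (1 : Polynomial (ZMod 2)) + X ^ (q*q-1) = X ^ (q*q-1) + 1 := by ring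
  have hgd : g ∣ X ^ (q * q - 1) + 1 := by
    obtain ⟨c, hc⟩ := hpd2
    have hrev := congrArg reverse hc
    rw [reverse_mul_of_domain] at hrev
    have hnp : p.natDegree = q := by
      have : p = X ^ q + (X + 1) := by rw [hp]; ring
      rw [this]
      compute_degree!
      · rw [if_neg (by omega), if_neg (by omega)]
        norm_num
      · omega
    have hrevp : p.reverse = g := by
      have hp1 : p = X ^ q + X ^ 1 + 1 := by rw [hp, pow_one]
      rw [reverse, hnp, hp1, hg]
      rw [reflect_add, reflect_add, reflect_monomial, reflect_monomial, reflect_one]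
      rw [revAt_le (le_refl q), revAt_le (by omega : 1 ≤ q), Nat.sub_self, pow_zero]
    have hqq : 0 < q * q - 1 := by have := Nat.mul_le_mul hq2 hq2; omega
    have hnA : (X ^ (q*q-1) + (1:Polynomial (ZMod 2))).natDegree = q*q-1 := by
      have : (X ^ (q*q-1) + (1:Polynomial (ZMod 2))) = X ^ (q*q-1) + C 1 := by simp
      rw [this, natDegree_X_pow_add_C]
    have hrevA : (X ^ (q*q-1) + (1:Polynomial (ZMod 2))).reverse = X ^ (q*q-1) + 1 := by
      rw [reverse, hnA, reflect_add, reflect_monomial, reflect_one]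
      rw [revAt_le (le_refl _)]
      simp
      ring
    rw [hrevA, hrevp] at hrev
    exact ⟨c.reverse, hrev⟩
  -- (1+X) ∣ it
  have hXd : (1 + X : Polynomial (ZMod 2)) ∣ X ^ (q * q - 1) + 1 := by
    have h1 : (X : Polynomial (ZMod 2)) - 1 ∣ X ^ (q*q-1) - 1 ^ (q*q-1) :=
      sub_dvd_pow_sub_pow _ _ _
    obtain ⟨c, hc⟩ := h1
    refine ⟨c, ?_⟩
    rw [one_pow] at hc
    linear_combination hc + (1 - c) * two_zero
  -- coprime (1+X) and g
  have hirr : Irreducible (1 + X : Polynomial (ZMod 2)) := by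
    have h := Polynomial.irreducible_X_sub_C (1 : ZMod 2)
    have : (X - C (1:ZMod 2)) = 1 + X := by
      rw [map_one]
      linear_combination -two_zero
    rwa [this] at h
  have hnd : ¬ (1 + X : Polynomial (ZMod 2)) ∣ g := by
    intro ⟨c, hc⟩
    have := congrArg (eval 1) hc
    simp [hg, eval_add, eval_pow] at this
    rw [show ((1:ZMod 2)+1) = 0 by decide, zero_mul] at this
    exact absurd this (by decide)
  have hcop2 : IsCoprime (1 + X : Polynomial (ZMod 2)) g :=
    (EuclideanDomain.dvd_or_coprime _ _ hirr).resolve_left hnd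
  have hdvd := hcop2.mul_dvd hXd hgd
  rw [← hfact] at hdvd
  have hmn : 4 ^ r - 1 = q * q - 1 := by rw [h4]
  rw [hmn]
  have : (1 : Polynomial (ZMod 2)) + X ^ (q*q-1) = X ^ (q*q-1) + 1 := by ring
  rw [this]
  exact hdvd
end

section
/- For r ≥ 3, the polynomial h_{r,1}(x) = (1 + x^(4^r − 1)) / (1 + x + x^(2^r − 1) + x^(2^r + 1)) in F_2[x] has exactly 4^r − 3^r nonzero coefficients. -/
open Polynomial Finset

lemma and_split (a b u v : ℕ) (hu : u < 2) (hv : v < 2) :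
    (2*a+u) &&& (2*b+v) = 2*(a&&&b) + (u&&&v) := by
  have huv : u &&& v < 2 := lt_of_le_of_lt Nat.and_le_left hu
  apply Nat.eq_of_testBit_eq
  intro i
  cases i with
  | zero =>
    rw [Nat.testBit_and]
    simp only [Nat.testBit_zero, Nat.mul_add_mod]
    interval_cases u <;> interval_cases v <;> decide
  | succ i =>
    rw [Nat.testBit_and]
    simp only [Nat.testBit_add_one]
    rw [Nat.mul_add_div (by norm_num), Nat.mul_add_div (by norm_num),
      Nat.mul_add_div (by norm_num)]
    rw [Nat.div_eq_of_lt hu, Nat.div_eq_of_lt hv, Nat.div_eq_of_lt huv]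
    simp [Nat.testBit_and]

def subsets (a : ℕ) : Finset ℕ := (Finset.range (a+1)).filter (fun s => s &&& a = s)

lemma mem_subsets {s a : ℕ} : s ∈ subsets a ↔ s &&& a = s := by
  simp only [subsets, mem_filter, mem_range]
  constructor
  · exact fun h => h.2
  · intro h
    exact ⟨Nat.lt_succ_of_le (h ▸ Nat.and_le_right), h⟩

lemma decomp (s a u : ℕ) (hu : u < 2) :
    s &&& (2*a+u) = 2*((s/2) &&& a) + ((s % 2) &&& u) := by
  conv_lhs => rw [← Nat.div_add_mod s 2]
  exact and_split (s/2) a (s%2) u (Nat.mod_lt _ (by norm_num)) hu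

lemma subsets_two_mul (a : ℕ) :
    subsets (2*a) = (subsets a).image (fun t => 2*t) := by
  ext s
  simp only [mem_subsets, mem_image]
  constructor
  · intro h
    have hd := decomp s a 0 (by norm_num)
    simp only [Nat.and_zero, Nat.add_zero] at hd
    rw [h] at hd
    have hm := Nat.div_add_mod s 2
    have hm2 : s % 2 < 2 := Nat.mod_lt _ (by norm_num)
    refine ⟨s/2, ?_, ?_⟩ <;> omega
  · rintro ⟨t, ht, rfl⟩
    have := and_split t a 0 0 (by norm_num) (by norm_num)
    simpa [ht] using this

lemma subsets_two_mul_add_one (a : ℕ) :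
    subsets (2*a+1) = (subsets a).image (fun t => 2*t) ∪ (subsets a).image (fun t => 2*t+1) := by
  ext s
  simp only [mem_subsets, mem_image, mem_union]
  constructor
  · intro h
    have hd := decomp s a 1 (by norm_num)
    rw [Nat.and_one_is_mod] at hd
    rw [h] at hd
    have hX : s/2 &&& a = s/2 := by omega
    rcases Nat.mod_two_eq_zero_or_one s with ho | ho
    · exact Or.inl ⟨s/2, hX, by omega⟩
    · exact Or.inr ⟨s/2, hX, by omega⟩
  · rintro (⟨t, ht, rfl⟩ | ⟨t, ht, rfl⟩)
    · have := and_split t a 0 1 (by norm_num) (by norm_num)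
      simpa [ht] using this
    · have := and_split t a 1 1 (by norm_num) (by norm_num)
      simpa [ht] using this

lemma card_subsets_even (a : ℕ) : (subsets (2*a)).card = (subsets a).card := by
  rw [subsets_two_mul, Finset.card_image_of_injective _ (fun x y h => by omega)]

lemma card_subsets_odd (a : ℕ) : (subsets (2*a+1)).card = 2 * (subsets a).card := by
  rw [subsets_two_mul_add_one, Finset.card_union_of_disjoint, Finset.card_image_of_injective _ (fun x y h => by omega), Finset.card_image_of_injective _ (fun x y h => by omega)]
  · ring
  · rw [Finset.disjoint_left]
    rintro x hx hy
    simp only [mem_image] at hx hy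
    obtain ⟨t, _, rfl⟩ := hx
    obtain ⟨t', _, h⟩ := hy
    omega

lemma sum_range_double {M : Type*} [AddCommMonoid M] (f : ℕ → M) (n : ℕ) :
    ∑ a ∈ Finset.range (2*n), f a = ∑ a ∈ Finset.range n, (f (2*a) + f (2*a+1)) := by
  induction n with
  | zero => simp
  | succ n ih =>
    have h2 : 2*(n+1) = (2*n)+1+1 := by ring
    rw [h2, Finset.sum_range_succ, Finset.sum_range_succ, ih, Finset.sum_range_succ]
    abel

lemma sum_card_subsets (r : ℕ) :
    ∑ a ∈ Finset.range (2^r), (subsets a).card = 3^r := by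
  induction r with
  | zero => decide
  | succ r ih =>
    rw [pow_succ, mul_comm, sum_range_double]
    simp only [card_subsets_even, card_subsets_odd]
    rw [pow_succ, mul_comm (3^r) 3, ← ih, Finset.mul_sum]
    exact Finset.sum_congr rfl (fun a _ => by ring)

lemma one_add_X_pow (a : ℕ) :
    ((1 + X : (ZMod 2)[X]))^a = ∑ s ∈ subsets a, X^s := by
  have hsub0 : subsets 0 = {0} := by decide
  induction a using Nat.binaryRec with
  | zero => simp [hsub0]
  | bit b n ih =>
    have inj : ∀ x ∈ subsets n, ∀ y ∈ subsets n, 2*x = 2*y → x = y := fun x _ y _ h => by omega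
    have inj' : ∀ x ∈ subsets n, ∀ y ∈ subsets n, 2*x+1 = 2*y+1 → x = y := fun x _ y _ h => by omega
    have disj : Disjoint ((subsets n).image (fun t => 2*t)) ((subsets n).image (fun t => 2*t+1)) := by
      rw [Finset.disjoint_left]
      rintro x hx hy
      simp only [mem_image] at hx hy
      obtain ⟨t, _, rfl⟩ := hx
      obtain ⟨t', _, h⟩ := hy
      omega
    have heven : ((1 + X : (ZMod 2)[X]))^(2*n) = ∑ s ∈ subsets n, X^(2*s) := by
      rw [show 2*n = n*2 from by ring, pow_mul, ih, sum_pow_char]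
      exact Finset.sum_congr rfl (fun s _ => by rw [← pow_mul, mul_comm])
    cases b with
    | false =>
      have hb : Nat.bit false n = 2*n := by simp [Nat.bit]
      rw [hb, heven, subsets_two_mul, Finset.sum_image inj]
    | true =>
      have hb : Nat.bit true n = 2*n+1 := by simp [Nat.bit]
      rw [hb, pow_succ, heven, subsets_two_mul_add_one, Finset.sum_union disj,
        Finset.sum_image inj, Finset.sum_image inj', Finset.sum_mul, ← Finset.sum_add_distrib]
      exact Finset.sum_congr rfl (fun s _ => by ring)

lemma support_sum_X_pow (D : Finset ℕ) : (∑ e ∈ D, (X:(ZMod 2)[X])^e).support = D := by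
  ext n
  rw [mem_support_iff, finset_sum_coeff]
  simp only [coeff_X_pow]
  rw [Finset.sum_ite_eq D n (fun _ => (1:ZMod 2))]
  by_cases hn : n ∈ D <;> simp [hn]

lemma unique_div (q a c a' c' : ℕ) (hc : c < q) (hc' : c' < q) (h : a*q+c = a'*q+c') :
    a = a' ∧ c = c' := by
  have hq : 0 < q := by omega
  have h1 : (q*a+c) % q = c := by rw [Nat.mul_add_mod, Nat.mod_eq_of_lt hc]
  have h2 : (q*a'+c') % q = c' := by rw [Nat.mul_add_mod, Nat.mod_eq_of_lt hc']
  have h3 : (q*a+c) / q = a := by rw [Nat.mul_add_div hq, Nat.div_eq_of_lt hc, Nat.add_zero]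
  have h4 : (q*a'+c') / q = a' := by rw [Nat.mul_add_div hq, Nat.div_eq_of_lt hc', Nat.add_zero]
  rw [mul_comm a q, mul_comm a' q] at h
  rw [h] at h1 h3
  omega

theorem stmt_13 (r : ℕ) (hr : 3 ≤ r) (h : Polynomial (ZMod 2))
    (hh : (1 + X + X ^ (2 ^ r - 1) + X ^ (2 ^ r + 1)) * h = 1 + X ^ (4 ^ r - 1)) :
    h.support.card = 4 ^ r - 3 ^ r := by
  classical
  set q : ℕ := 2 ^ r with hqdef
  have hq8 : 8 ≤ q := by
    calc 8 = 2^3 := by norm_num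
    _ ≤ 2^r := Nat.pow_le_pow_right (by norm_num) hr
  obtain ⟨k, hqk⟩ : ∃ k, q = k + 1 := ⟨q - 1, by omega⟩
  have hk7 : 7 ≤ k := by omega
  set N : ℕ := q * q with hNdef
  have hN4 : N = 4 ^ r := by rw [hNdef, hqdef, ← mul_pow]; norm_num
  set Sig : Finset ((_ : ℕ) × ℕ) := (Finset.range q).sigma (fun a => subsets a) with hSig
  set φ : ((_ : ℕ) × ℕ) → ℕ := fun p => p.1 * q + ((q - 1 - p.1) + p.2) with hφ
  have hmem : ∀ p ∈ Sig, p.1 < q ∧ p.2 ≤ p.1 := by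
    rintro ⟨a, s⟩ hp
    rw [hSig, Finset.mem_sigma, Finset.mem_range] at hp
    have hs : s &&& a = s := mem_subsets.mp hp.2
    exact ⟨hp.1, hs ▸ Nat.and_le_right⟩
  have hlt : ∀ p ∈ Sig, (q - 1 - p.1) + p.2 < q := by
    intro p hp
    obtain ⟨h1, h2⟩ := hmem p hp
    omega
  have hinj : ∀ p ∈ Sig, ∀ p' ∈ Sig, φ p = φ p' → p = p' := by
    rintro ⟨a, s⟩ hp ⟨a', s'⟩ hp' he
    obtain ⟨hac, hcc⟩ := unique_div q a _ a' _ (hlt _ hp) (hlt _ hp') he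
    subst hac
    simp only at hcc
    have : s = s' := by omega
    rw [this]
  set C : Finset ℕ := Sig.image φ with hC
  have hCsub : C ⊆ Finset.range N := by
    intro e he
    rw [hC, Finset.mem_image] at he
    obtain ⟨p, hp, rfl⟩ := he
    rw [Finset.mem_range]
    have h1 := (hmem p hp).1
    have h2 := hlt p hp
    simp only [hφ]
    calc p.1 * q + ((q - 1 - p.1) + p.2) < p.1 * q + q := by omega
    _ = (p.1 + 1) * q := by ring
    _ ≤ q * q := mul_le_mul_left (show p.1 + 1 ≤ q by omega) q
  have hCcard : C.card = 3 ^ r := by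
    rw [hC, Finset.card_image_of_injOn (fun p hp p' hp' => hinj p hp p' hp'), hSig,
      Finset.card_sigma]
    rw [hqdef]
    exact sum_card_subsets r
  set S : (ZMod 2)[X] := ∑ i ∈ Finset.range N, X ^ i with hS0
  set V : (ZMod 2)[X] := ∑ a ∈ Finset.range q, (X^k * (1 + X)) ^ a with hV0
  have h2 : (2 : (ZMod 2)[X]) = 0 := by
    have := CharP.cast_eq_zero ((ZMod 2)[X]) 2
    simpa using this
  have hS : (1 + X) * S = 1 + X ^ N := by
    have hg := geom_sum_mul (X : (ZMod 2)[X]) N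
    rw [← hS0] at hg
    linear_combination hg + (S - 1) * h2
  have hFrob : ((1 + X : (ZMod 2)[X])) ^ q = 1 + X ^ q := by
    rw [hqdef, add_pow_char_pow]
    simp
  have hV : (1 + X^k * (1+X)) * V = 1 + X^(k*(k+1)) + X^N := by
    have hg := geom_sum_mul (X^k * (1+X) : (ZMod 2)[X]) q
    rw [← hV0] at hg
    have hwq : (X^k * (1+X) : (ZMod 2)[X])^q = X^(k*(k+1)) + X^N := by
      rw [mul_pow, hFrob, ← pow_mul, hqk, mul_add, mul_one, ← pow_add]
      have hNe : k * (k+1) + (k+1) = N := by rw [hNdef, hqk]; ring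
      rw [hNe]
    rw [hwq] at hg
    linear_combination hg + (V - 1) * h2
  set h₀ : (ZMod 2)[X] := ∑ e ∈ Finset.range N \ C, X ^ e with hh₀
  have hCsum : ∑ e ∈ C, (X:(ZMod 2)[X])^e = X^k * V := by
    rw [hC, Finset.sum_image hinj, hSig, Finset.sum_sigma, hV0, Finset.mul_sum]
    refine Finset.sum_congr rfl ?_
    intro a ha
    rw [Finset.mem_range] at ha
    have hak : a ≤ k := by omega
    have hexp : ∀ s : ℕ, φ ⟨a, s⟩ = (k + k*a) + s := by
      intro s
      simp only [hφ]
      have hms : a * q = k * a + a := by rw [hqk]; ring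
      omega
    calc ∑ s ∈ subsets a, (X:(ZMod 2)[X]) ^ φ ⟨a, s⟩
        = ∑ s ∈ subsets a, X^(k + k*a) * X^s := by
          refine Finset.sum_congr rfl (fun s _ => ?_)
          rw [hexp s, pow_add]
    _ = X^(k+k*a) * ((1+X))^a := by rw [← Finset.mul_sum, one_add_X_pow]
    _ = X^k * (X^k * (1+X))^a := by rw [mul_pow, ← pow_mul, pow_add]; ring
  have hD : h₀ = S + X^k * V := by
    have hsd := Finset.sum_sdiff (f := fun e => (X:(ZMod 2)[X])^e) hCsub
    rw [← hh₀, ← hS0, hCsum] at hsd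
    linear_combination hsd - (X^k*V) * h2
  have hfh₀ : (1 + X + X ^ (q - 1) + X ^ (q + 1)) * h₀ = 1 + X ^ (4 ^ r - 1) := by
    have e1 : q - 1 = k := by omega
    have e2 : q + 1 = k + 2 := by omega
    have e3 : (4:ℕ)^r - 1 = k + k*(k+1) := by
      have h4 : (4:ℕ)^r = N := hN4.symm
      rw [h4, hNdef, hqk]
      have : (k+1)*(k+1) = k + k*(k+1) + 1 := by ring
      omega
    rw [e1, e2, e3, hD]
    have hNk : N = (k+1)*(k+1) := by rw [hNdef, hqk]
    have hf : (1 + X + X^k + X^(k+2) : (ZMod 2)[X]) = (1+X) * (1 + X^k*(1+X)) := by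
      linear_combination (-X^(k+1)) * h2
    rw [hf]
    calc (1+X) * (1 + X^k*(1+X)) * (S + X^k*V)
        = (1 + X^k*(1+X)) * ((1+X)*S) + (X^k + X^(k+1)) * ((1 + X^k*(1+X))*V) := by ring
    _ = (1 + X^k*(1+X)) * (1 + X^N) + (X^k + X^(k+1)) * (1 + X^(k*(k+1)) + X^N) := by
        rw [hS, hV]
    _ = 1 + X ^ (k + k*(k+1)) := by
        rw [hNk]
        linear_combination (X^((k+1)*(k+1)) + X^k + X^(k+(k+1)*(k+1)) + X^(k+1)
          + X^(k+1+(k+1)*(k+1))) * h2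
  have hfne : (1 + X + X ^ (q - 1) + X ^ (q + 1) : (ZMod 2)[X]) ≠ 0 := by
    intro hzero
    have hc : (1 + X + X ^ (q - 1) + X ^ (q + 1) : (ZMod 2)[X]).coeff 0 = 1 := by
      simp [coeff_one, coeff_X, coeff_X_pow]
      omega
    rw [hzero] at hc
    simp at hc
  have hhh₀ : h = h₀ := by
    apply mul_left_cancel₀ hfne
    rw [hh, hfh₀]
  rw [hhh₀, hh₀, support_sum_X_pow, Finset.card_sdiff_of_subset hCsub, Finset.card_range, hCcard, hN4]
end

section
/- For r ≥ 3, in F_2[x], (1 + x + x^(2^r − 1) + x^(2^r + 1)) · (∑_{j=0}^{4^r − 2^r − 1} x^j + ∑_{n=1}^{2^r − 1} x^((2^r − 1)n) (1+x)^(n−1)) = 1 + x^(4^r − 1). -/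
open Polynomial Finset

theorem stmt_14 (r : ℕ) (hr : 3 ≤ r) :
    ((1 + X + X ^ (2 ^ r - 1) + X ^ (2 ^ r + 1) : Polynomial (ZMod 2)) *
      ((∑ j ∈ Finset.range (4 ^ r - 2 ^ r), X ^ j)
        + ∑ n ∈ Finset.Icc 1 (2 ^ r - 1), X ^ ((2 ^ r - 1) * n) * (1 + X) ^ (n - 1)))
    = 1 + X ^ (4 ^ r - 1) := by
  have h2z : (2 : Polynomial (ZMod 2)) = 0 := by
    have h : (2 : Polynomial (ZMod 2)) = C 2 := by
      rw [map_ofNat]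
    rw [h, show (2 : ZMod 2) = 0 from rfl, map_zero]
  have hpow : (1 : ℕ) ≤ 2 ^ r := Nat.one_le_two_pow
  set m := 2 ^ r - 1 with hmdef
  have hm : 2 ^ r = m + 1 := by omega
  have h4 : (4 : ℕ) ^ r = 2 ^ r * 2 ^ r := by
    rw [show (4 : ℕ) = 2 * 2 from rfl, mul_pow]
  have hq1 : 2 ^ r + 1 = m + 2 := by omega
  have hS : 4 ^ r - 2 ^ r = (m + 1) * m := by
    rw [h4, hm]
    have : (m + 1) * (m + 1) = (m + 1) * m + (m + 1) := by ring
    omega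
  have h41 : 4 ^ r - 1 = m * m + 2 * m := by
    rw [h4, hm]
    have : (m + 1) * (m + 1) = (m * m + 2 * m) + 1 := by ring
    omega
  -- geometric sum in char 2
  have hgeom : ∀ (u : Polynomial (ZMod 2)) (N : ℕ),
      (1 + u) * ∑ k ∈ Finset.range N, u ^ k = 1 + u ^ N := by
    intro u N
    have h := geom_sum_mul u N
    linear_combination h + ((∑ k ∈ Finset.range N, u ^ k) - 1) * h2z
  -- Frobenius
  have hq : ((1 + X : Polynomial (ZMod 2))) ^ (m + 1) = 1 + X ^ (m + 1) := by
    rw [← hm, add_pow_char_pow (p := 2), one_pow]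
  -- reindex the Icc sum
  have hT : ∑ n ∈ Finset.Icc 1 m, (X : Polynomial (ZMod 2)) ^ (m * n) * (1 + X) ^ (n - 1)
      = X ^ m * ∑ k ∈ Finset.range m, (X ^ m * (1 + X)) ^ k := by
    rw [← Finset.Ico_add_one_right_eq_Icc, Finset.sum_Ico_eq_sum_range]
    simp only [Nat.add_sub_cancel, Nat.succ_sub_one]
    rw [Finset.mul_sum]
    apply Finset.sum_congr rfl
    intro i _
    rw [mul_pow, ← pow_mul]
    have : m * (1 + i) = m + m * i := by ring
    rw [this, pow_add, show 1 + i - 1 = i from by omega]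
    ring
  rw [hS, h41, hq1, hT]
  have hS' := hgeom X ((m + 1) * m)
  have hU := hgeom (X ^ m * (1 + X)) m
  have hum : ((X : Polynomial (ZMod 2)) ^ m * (1 + X)) ^ m = X ^ (m * m) * (1 + X) ^ m := by
    rw [mul_pow, ← pow_mul]
  calc (1 + X + X ^ m + X ^ (m + 2) : Polynomial (ZMod 2)) *
        ((∑ j ∈ Finset.range ((m + 1) * m), X ^ j)
          + X ^ m * ∑ k ∈ Finset.range m, (X ^ m * (1 + X)) ^ k)
      = (1 + X ^ m * (1 + X)) * ((1 + X) * ∑ j ∈ Finset.range ((m + 1) * m), X ^ j)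
        + X ^ m * (1 + X) * ((1 + X ^ m * (1 + X)) *
            ∑ k ∈ Finset.range m, (X ^ m * (1 + X)) ^ k) := by
        linear_combination (-(X ^ (m + 1) * (∑ j ∈ Finset.range ((m + 1) * m), (X : Polynomial (ZMod 2)) ^ j))
          - X ^ (m + 1) * X ^ m * ∑ k ∈ Finset.range m, (X ^ m * (1 + X)) ^ k) * h2z
    _ = (1 + X ^ m * (1 + X)) * (1 + X ^ ((m + 1) * m))
        + X ^ m * (1 + X) * (1 + X ^ (m * m) * (1 + X) ^ m) := by rw [hS', hU, hum]
    _ = 1 + X ^ (m * m + 2 * m) := by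
        linear_combination (X ^ (m * m + m)) * hq
          + ((X : Polynomial (ZMod 2)) ^ m + X ^ (m + 1) + X ^ (m * m + m)
            + X ^ (m * m + 2 * m + 1)) * h2z
end

section
/- For r ≥ 1, the polynomial S_{r,1}(x) = ∑_{n=1}^{2^r − 1} x^((2^r − 1)n) (1+x)^(n−1) over F_2 has exactly 3^r − 2^r nonzero coefficients. -/
open Polynomial Finset

namespace S15

lemma support_add_eq {R : Type*} [Semiring R] {p q : R[X]}
    (h : Disjoint p.support q.support) : (p + q).support = p.support ∪ q.support := by
  ext k
  simp only [mem_support_iff, coeff_add, Finset.mem_union]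
  constructor
  · intro hk
    by_contra hc
    push_neg at hc
    simp [hc.1, hc.2] at hk
  · intro hk
    rcases hk with hk | hk
    · have : q.coeff k = 0 := by
        by_contra hq
        exact (Finset.disjoint_left.mp h (mem_support_iff.mpr hk)) (mem_support_iff.mpr hq)
      simpa [this]
    · have : p.coeff k = 0 := by
        by_contra hp
        exact (Finset.disjoint_left.mp h (mem_support_iff.mpr hp)) (mem_support_iff.mpr hk)
      simpa [this]

lemma support_sum_subset {R : Type*} [Semiring R] (s : Finset ℕ) (p : ℕ → R[X]) :
    (∑ n ∈ s, p n).support ⊆ s.biUnion fun n => (p n).support := by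
  classical
  induction s using Finset.induction with
  | empty => simp
  | @insert _ _ ha ih =>
    rw [Finset.sum_insert ha, Finset.biUnion_insert]
    exact support_add.trans (Finset.union_subset_union le_rfl ih)

lemma card_support_sum {R : Type*} [Semiring R] (s : Finset ℕ) (p : ℕ → R[X])
    (h : ∀ m ∈ s, ∀ n ∈ s, m ≠ n → Disjoint (p m).support (p n).support) :
    (∑ n ∈ s, p n).support.card = ∑ n ∈ s, (p n).support.card := by
  classical
  induction s using Finset.induction with
  | empty => simp
  | @insert a s ha ih =>
    rw [Finset.sum_insert ha, Finset.sum_insert ha,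
      support_add_eq, Finset.card_union_of_disjoint, ih]
    · exact fun m hm n hn => h m (Finset.mem_insert_of_mem hm) n (Finset.mem_insert_of_mem hn)
    all_goals {
      refine Finset.disjoint_left.mpr fun k hk hk' => ?_
      have := support_sum_subset s p hk'
      rw [Finset.mem_biUnion] at this
      obtain ⟨n, hn, hkn⟩ := this
      exact Finset.disjoint_left.mp
        (h a (Finset.mem_insert_self a s) n (Finset.mem_insert_of_mem hn)
          (fun he => ha (he ▸ hn))) hk hkn }

lemma support_X_pow_mul {R : Type*} [Semiring R] (a : ℕ) (p : R[X]) :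
    (X ^ a * p).support = p.support.map (addLeftEmbedding a) := by
  ext k
  simp only [mem_support_iff, Finset.mem_map, addLeftEmbedding_apply]
  constructor
  · intro hk
    rcases le_or_gt a k with hak | hak
    · refine ⟨k - a, ?_, by omega⟩
      rw [X_pow_mul, coeff_mul_X_pow'] at hk
      simpa [hak] using hk
    · exfalso
      rw [X_pow_mul, coeff_mul_X_pow'] at hk
      simp [Nat.not_le.mpr hak] at hk
  · rintro ⟨d, hd, rfl⟩
    rw [X_pow_mul, add_comm a d, coeff_mul_X_pow]
    exact hd

noncomputable def f (m : ℕ) : ℕ := ((1 + X : (ZMod 2)[X]) ^ m).support.card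

lemma pow_two_eq_expand (p : (ZMod 2)[X]) : p ^ 2 = expand (ZMod 2) 2 p := by
  have := map_frobenius_expand 2 p
  rwa [ZMod.frobenius_zmod, Polynomial.map_id, eq_comm] at this

lemma support_expand (p : (ZMod 2)[X]) :
    (expand (ZMod 2) 2 p).support = p.support.map ⟨(2 * ·), fun x y h => by dsimp at h; omega⟩ := by
  ext k
  simp only [mem_support_iff, coeff_expand (by norm_num : 0 < 2), Finset.mem_map,
    Function.Embedding.coeFn_mk]
  constructor
  · intro hk
    by_cases h2 : 2 ∣ k
    · exact ⟨k / 2, by simpa [h2] using hk, by show 2 * (k / 2) = k; omega⟩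
    · simp [h2] at hk
  · rintro ⟨d, hd, rfl⟩
    change (if 2 ∣ 2 * d then p.coeff (2 * d / 2) else 0) ≠ 0
    simpa using hd

lemma f_two_mul (m : ℕ) : f (2 * m) = f m := by
  unfold f
  rw [mul_comm, pow_mul, pow_two_eq_expand, support_expand, Finset.card_map]

lemma even_mem_support_two_mul (m k : ℕ) (hk : k ∈ ((1 + X : (ZMod 2)[X]) ^ (2 * m)).support) :
    2 ∣ k := by
  rw [mul_comm, pow_mul, pow_two_eq_expand, support_expand] at hk
  simp only [Finset.mem_map, Function.Embedding.coeFn_mk] at hk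
  obtain ⟨d, _, rfl⟩ := hk
  exact ⟨d, rfl⟩

lemma f_two_mul_add_one (m : ℕ) : f (2 * m + 1) = 2 * f m := by
  unfold f
  have hq : ((1 + X : (ZMod 2)[X]) ^ (2 * m + 1))
      = (1 + X) ^ (2 * m) + X * (1 + X) ^ (2 * m) := by ring
  set q : (ZMod 2)[X] := (1 + X) ^ (2 * m)
  have hdis : Disjoint q.support (X * q).support := by
    refine Finset.disjoint_left.mpr fun k hk hk' => ?_
    have h1 : 2 ∣ k := even_mem_support_two_mul m k hk
    have := support_X_pow_mul 1 q
    rw [pow_one] at this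
    rw [this, Finset.mem_map] at hk'
    obtain ⟨d, hd, rfl⟩ := hk'
    have : 2 ∣ d := even_mem_support_two_mul m d hd
    simp only [addLeftEmbedding_apply] at h1
    omega
  rw [hq, support_add_eq hdis, Finset.card_union_of_disjoint hdis]
  have hX : (X * q).support.card = q.support.card := by
    have := support_X_pow_mul 1 q
    rw [pow_one] at this
    rw [this, Finset.card_map]
  have hfm : q.support.card = f m := (f_two_mul m)
  unfold f at hfm
  omega

lemma sum_f (r : ℕ) : ∑ m ∈ range (2 ^ r), f m = 3 ^ r := by
  induction r with
  | zero =>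
    simp only [pow_zero, Finset.sum_range_one, f, pow_zero]
    rw [← C_1, support_C one_ne_zero]
    simp
  | succ r ih =>
    have key : ∀ N : ℕ, ∑ m ∈ range (2 * N), f m = ∑ m ∈ range N, 3 * f m := by
      intro N
      induction N with
      | zero => simp
      | succ N ihN =>
        rw [show 2 * (N + 1) = (2 * N + 1) + 1 by ring, Finset.sum_range_succ,
          Finset.sum_range_succ, ihN, Finset.sum_range_succ, f_two_mul_add_one, f_two_mul]
        ring
    rw [show (2 : ℕ) ^ (r + 1) = 2 * 2 ^ r by ring, key, ← Finset.mul_sum, ih]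
    ring

lemma f_pred_pow (r : ℕ) : f (2 ^ r - 1) = 2 ^ r := by
  induction r with
  | zero =>
    simp only [pow_zero, Nat.sub_self, f, pow_zero]
    rw [← C_1, support_C one_ne_zero]
    simp
  | succ r ih =>
    have h2 : 1 ≤ 2 ^ r := Nat.one_le_two_pow
    rw [show 2 ^ (r + 1) - 1 = 2 * (2 ^ r - 1) + 1 by omega, f_two_mul_add_one, ih]
    ring

lemma card_term (a m : ℕ) :
    ((X ^ a * (1 + X) ^ m : (ZMod 2)[X])).support.card = f m := by
  rw [support_X_pow_mul, Finset.card_map]; rfl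

lemma term_support_subset (a m k : ℕ)
    (hk : k ∈ ((X ^ a * (1 + X) ^ m : (ZMod 2)[X])).support) : a ≤ k ∧ k ≤ a + m := by
  rw [support_X_pow_mul, Finset.mem_map] at hk
  obtain ⟨d, hd, rfl⟩ := hk
  have hdle : d ≤ ((1 + X : (ZMod 2)[X]) ^ m).natDegree := le_natDegree_of_mem_supp d hd
  have hdeg : ((1 + X : (ZMod 2)[X]) ^ m).natDegree ≤ m := by
    refine (natDegree_pow_le).trans ?_
    have : (1 + X : (ZMod 2)[X]).natDegree ≤ 1 :=
      (natDegree_add_le 1 X).trans (by simp)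
    calc m * (1 + X : (ZMod 2)[X]).natDegree ≤ m * 1 := Nat.mul_le_mul_left m this
      _ = m := mul_one m
  simp only [addLeftEmbedding_apply]
  omega

end S15

open S15 in
theorem stmt_15 (r : ℕ) (hr : 1 ≤ r) :
    (∑ n ∈ Finset.Icc 1 (2 ^ r - 1),
        X ^ ((2 ^ r - 1) * n) * (1 + X) ^ (n - 1) : Polynomial (ZMod 2)).support.card
      = 3 ^ r - 2 ^ r := by
  have h2r : 2 ≤ 2 ^ r := by
    calc 2 = 2 ^ 1 := (pow_one 2).symm
    _ ≤ 2 ^ r := Nat.pow_le_pow_right (by norm_num) hr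
  rw [card_support_sum]
  · have : ∀ n ∈ Finset.Icc 1 (2 ^ r - 1),
        ((X ^ ((2 ^ r - 1) * n) * (1 + X) ^ (n - 1) : (ZMod 2)[X])).support.card
          = f (n - 1) := fun n _ => card_term _ _
    rw [Finset.sum_congr rfl this]
    have hre : ∑ n ∈ Finset.Icc 1 (2 ^ r - 1), f (n - 1)
        = ∑ m ∈ Finset.range (2 ^ r - 1), f m := by
      rw [show Finset.Icc 1 (2 ^ r - 1) = Finset.Ico 1 (2 ^ r - 1 + 1) by
        rw [Finset.Ico_add_one_right_eq_Icc], Finset.sum_Ico_eq_sum_range]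
      simp
    rw [hre]
    have h3 : ∑ m ∈ Finset.range (2 ^ r), f m = 3 ^ r := sum_f r
    rw [show (2 : ℕ) ^ r = (2 ^ r - 1) + 1 by omega, Finset.sum_range_succ] at h3
    have h4 := f_pred_pow r
    have h23 : 2 ^ r ≤ 3 ^ r := Nat.pow_le_pow_left (by norm_num) r
    omega
  · intro m hm n hn hmn
    simp only [Finset.mem_Icc] at hm hn
    -- WLOG on order
    have key : ∀ m n : ℕ, 1 ≤ m → n ≤ 2 ^ r - 1 → m < n →
        Disjoint ((X ^ ((2 ^ r - 1) * m) * (1 + X) ^ (m - 1) : (ZMod 2)[X])).support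
          ((X ^ ((2 ^ r - 1) * n) * (1 + X) ^ (n - 1) : (ZMod 2)[X])).support := by
      intro m n hm1 hn2 hmn
      refine Finset.disjoint_left.mpr fun k hk hk' => ?_
      obtain ⟨h1, h2⟩ := term_support_subset _ _ _ hk
      obtain ⟨h3, h4⟩ := term_support_subset _ _ _ hk'
      have hstep : (2 ^ r - 1) * m + (m - 1) < (2 ^ r - 1) * n := by
        have hle : (2 ^ r - 1) * (m + 1) ≤ (2 ^ r - 1) * n :=
          Nat.mul_le_mul_left _ hmn
        have : (2 ^ r - 1) * (m + 1) = (2 ^ r - 1) * m + (2 ^ r - 1) := by ring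
        have hmlt : m < 2 ^ r - 1 := lt_of_lt_of_le hmn hn2
        omega
      omega
    rcases lt_or_gt_of_ne hmn with h | h
    · exact key m n hm.1 hn.2 h
    · exact (key n m hn.1 hm.2 h).symm
end

section
/- For r ≥ 1, the polynomial f_{r,2}(x) = 1 + x + x^(2^r) + x^(2^r + 2) in F_2[x] divides 1 + x^(4^r + 2^r + 1). -/
open Polynomial

theorem stmt_17 (r : ℕ) (hr : 1 ≤ r) :
    (1 + X + X ^ (2 ^ r) + X ^ (2 ^ r + 2) : Polynomial (ZMod 2))
      ∣ 1 + X ^ (4 ^ r + 2 ^ r + 1) := by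
  set q := 2 ^ r with hq
  have h4 : (4 : ℕ) ^ r = q * q := by
    rw [hq, ← pow_add, show (4 : ℕ) = 2 ^ 2 from rfl, ← pow_mul, two_mul]
  have h2 : (2 : Polynomial (ZMod 2)) = 0 := by
    have := CharP.cast_eq_zero (Polynomial (ZMod 2)) 2
    exact_mod_cast this
  set p : Polynomial (ZMod 2) := 1 + X ^ q + X ^ (q + 1) with hp
  -- factorization of f
  have hfactor : (1 + X + X ^ q + X ^ (q + 2) : Polynomial (ZMod 2)) = (X + 1) * p := by
    rw [hp]
    linear_combination -(X : Polynomial (ZMod 2)) ^ (q + 1) * h2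
  -- u - 1 = p
  have hu : (X : Polynomial (ZMod 2)) ^ q * (X + 1) - 1 = p := by
    rw [hp]
    linear_combination -h2
  -- p divides u^(q+1) - 1
  have hpow : p ∣ ((X : Polynomial (ZMod 2)) ^ q * (X + 1)) ^ (q + 1) - 1 := by
    have := sub_dvd_pow_sub_pow ((X : Polynomial (ZMod 2)) ^ q * (X + 1)) 1 (q + 1)
    rw [hu, one_pow] at this
    exact this
  -- Frobenius
  have hfrob : ((X : Polynomial (ZMod 2)) + 1) ^ q = X ^ q + 1 := by
    rw [hq]
    have := add_pow_char_pow (X : Polynomial (ZMod 2)) 1 2 r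
    simpa using this
  -- expand u^(q+1)
  have hexp : ((X : Polynomial (ZMod 2)) ^ q * (X + 1)) ^ (q + 1)
      = X ^ (q * q + q) * p + X ^ (q * q + q + 1) := by
    rw [pow_succ, mul_pow, hfrob, ← pow_mul, hp]
    ring
  -- p divides X^n - 1
  have hdvd1 : p ∣ (X : Polynomial (ZMod 2)) ^ (q * q + q + 1) - 1 := by
    have h := hpow
    rw [hexp] at h
    have : (X : Polynomial (ZMod 2)) ^ (q * q + q + 1) - 1
        = (X ^ (q * q + q) * p + X ^ (q * q + q + 1) - 1) - X ^ (q * q + q) * p := by ring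
    rw [this]
    exact dvd_sub h (dvd_mul_left p _)
  -- X + 1 divides X^n - 1
  have hdvd2 : ((X : Polynomial (ZMod 2)) + 1) ∣ (X : Polynomial (ZMod 2)) ^ (q * q + q + 1) - 1 := by
    have := sub_dvd_pow_sub_pow (X : Polynomial (ZMod 2)) 1 (q * q + q + 1)
    rw [one_pow] at this
    have hX : (X : Polynomial (ZMod 2)) - 1 = X + 1 := by linear_combination -h2
    rwa [hX] at this
  -- coprimality
  have hcop : IsCoprime ((X : Polynomial (ZMod 2)) + 1) p := by
    refine ⟨X ^ q, 1, ?_⟩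
    rw [hp]
    linear_combination ((X : Polynomial (ZMod 2)) ^ q + X ^ (q + 1)) * h2
  have hmain : ((X : Polynomial (ZMod 2)) + 1) * p ∣ (X : Polynomial (ZMod 2)) ^ (q * q + q + 1) - 1 :=
    hcop.mul_dvd hdvd2 hdvd1
  have hrw : (1 : Polynomial (ZMod 2)) + X ^ (q * q + q + 1)
      = (X : Polynomial (ZMod 2)) ^ (q * q + q + 1) - 1 := by
    linear_combination h2
  rw [h4, hrw, hfactor]
  exact hmain
end

section
/- For r ≥ 3, the polynomial h_{r,2}(x) = (1 + x^(4^r + 2^r + 1)) / (1 + x + x^(2^r) + x^(2^r + 2)) in F_2[x] has exactly 4^r − 3^r + 2^r nonzero coefficients. -/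
open Polynomial Finset
abbrev R := Polynomial (ZMod 2)

lemma two_zero : (2:R) = 0 := by exact_mod_cast CharP.cast_eq_zero R 2

lemma geom (t : R) (m : ℕ) : (1 + t) * ∑ n ∈ Finset.range m, t ^ n = 1 + t ^ m := by
  have h := geom_sum_mul t m
  linear_combination h + (∑ n ∈ Finset.range m, t^n - 1) * two_zero

lemma onePlusX_ne : ((1:R) + X) ≠ 0 := by
  have := X_add_C_ne_zero (R := ZMod 2) 1
  simpa [add_comm] using this

lemma ndeg : ((1:R)+X).natDegree = 1 := by
  rw [add_comm, ← C_1, natDegree_X_add_C]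

lemma supp_pow_sub (n : ℕ) : (((1:R)+X)^n).support ⊆ range (n+1) := by
  intro k hk
  simp only [mem_range, Nat.lt_succ_iff]
  exact (le_natDegree_of_mem_supp k hk).trans (natDegree_pow_le.trans (by rw [ndeg, mul_one]))


lemma frob (k : ℕ) : ((1:R) + X)^(2^k) = 1 + X^(2^k) := by
  rw [add_pow_char_pow]; norm_num

lemma supp_mul_X_pow (p : R) (m : ℕ) :
    (p * X^m).support = p.support.image (· + m) := by
  ext k
  simp only [mem_support_iff, Finset.mem_image, coeff_mul_X_pow']
  constructor
  · intro hk
    by_cases hm : m ≤ k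
    · exact ⟨k - m, by simpa [hm] using hk, by omega⟩
    · simp [hm] at hk
  · rintro ⟨a, ha, rfl⟩
    simpa using ha

lemma supp_add_of_disjoint {f g : R} (h : Disjoint f.support g.support) :
    (f+g).support = f.support ∪ g.support := by
  ext k
  simp only [mem_support_iff, coeff_add, Finset.mem_union]
  by_cases hf : f.coeff k = 0 <;> by_cases hg : g.coeff k = 0
  · simp [hf, hg]
  · simp [hf, hg]
  · simp [hf, hg]
  · exact (Finset.disjoint_left.mp h (mem_support_iff.2 hf) (mem_support_iff.2 hg)).elim

lemma supp_add_sdiff (f g : R) (hfg : g.support ⊆ f.support) :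
    (f+g).support = f.support \ g.support := by
  ext k
  have hsub := @hfg k
  simp only [mem_support_iff, coeff_add, Finset.mem_sdiff, not_not] at hsub ⊢
  revert hsub
  generalize f.coeff k = a; generalize g.coeff k = b
  revert a b; decide

lemma expand_two (m : ℕ) : ((1:R)+X)^(2*m) = expand (ZMod 2) 2 ((1+X)^m) := by
  rw [map_pow, map_add, map_one, expand_X, pow_mul]
  congr 1
  have := frob 1
  norm_num at this
  rw [this]

lemma supp_expand (p : R) : (expand (ZMod 2) 2 p).support = p.support.image (2 * ·) := by
  ext k
  simp only [mem_support_iff, Finset.mem_image, coeff_expand (by norm_num : 0 < 2)]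
  by_cases hd : 2 ∣ k
  · obtain ⟨j, rfl⟩ := hd
    simp only [if_pos (dvd_mul_right 2 j), Nat.mul_div_cancel_left _ (by norm_num : 0 < 2)]
    constructor
    · intro hj; exact ⟨j, hj, rfl⟩
    · rintro ⟨a, ha, he⟩
      have hja : j = a := by omega
      rw [hja]; exact ha
  · rw [if_neg hd]
    simp only [ne_eq, not_true_eq_false, false_iff]
    rintro ⟨a, ha, rfl⟩
    exact hd (dvd_mul_right 2 a)

lemma supp_even (m : ℕ) :
    (((1:R)+X)^(2*m)).support = (((1:R)+X)^m).support.image (2 * ·) := by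
  rw [expand_two, supp_expand]

noncomputable def w (n : ℕ) : ℕ := (((1:R)+X)^n).support.card

lemma wa (m : ℕ) : w (2*m) = w m := by
  rw [w, supp_even, Finset.card_image_of_injective _ (fun a b h => by omega), w]

lemma wb (m : ℕ) : w (2*m+1) = 2 * w m := by
  have h1 : ((1:R)+X)^(2*m+1) = (1+X)^(2*m) + (1+X)^(2*m) * X^1 := by
    rw [pow_succ]; ring
  have hsup := supp_mul_X_pow (((1:R)+X)^(2*m)) 1
  have hdis : Disjoint ((((1:R)+X)^(2*m)).support) ((((1:R)+X)^(2*m) * X^1).support) := by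
    rw [hsup, supp_even, Finset.disjoint_left]
    rintro k hk hk2
    simp only [Finset.mem_image] at hk hk2
    obtain ⟨a, _, rfl⟩ := hk
    obtain ⟨b, hb, he⟩ := hk2
    obtain ⟨c, _, rfl⟩ := hb
    omega
  rw [w, h1, supp_add_of_disjoint hdis, Finset.card_union_of_disjoint hdis, hsup,
    Finset.card_image_of_injective _ (fun a b h => by omega), supp_even,
    Finset.card_image_of_injective _ (fun a b h => by omega), w, two_mul]

lemma w_zero : w 0 = 1 := by
  rw [w, pow_zero, ← C_1, support_C one_ne_zero]
  rfl

lemma sum_split (f : ℕ → ℕ) (N : ℕ) :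
    ∑ n ∈ range (2*N), f n = ∑ m ∈ range N, (f (2*m) + f (2*m+1)) := by
  induction N with
  | zero => simp
  | succ N ih =>
    rw [show 2*(N+1) = (2*N+1)+1 by ring, sum_range_succ, sum_range_succ, ih, sum_range_succ]
    omega

lemma sum_w (r : ℕ) : ∑ n ∈ range (2^r), w n = 3^r := by
  induction r with
  | zero => simpa using w_zero
  | succ r ih =>
    rw [show (2:ℕ)^(r+1) = 2*2^r by ring, sum_split,
      Finset.sum_congr rfl (fun m _ => by rw [wa, wb] : ∀ m ∈ range (2^r), w (2*m) + w (2*m+1) = w m + 2 * w m)]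
    rw [Finset.sum_add_distrib, ← Finset.mul_sum, ih, pow_succ]
    ring

lemma w_ones (r : ℕ) : w (2^r - 1) = 2^r := by
  induction r with
  | zero => simpa using w_zero
  | succ r ih =>
    have h1 : 1 ≤ (2:ℕ)^r := Nat.one_le_two_pow
    rw [show (2:ℕ)^(r+1) - 1 = 2*(2^r - 1)+1 by omega, wb, ih, pow_succ]
    ring


lemma four_pow (r : ℕ) : (4:ℕ)^r = 2^r * 2^r := by
  rw [show (4:ℕ) = 2*2 from rfl, mul_pow]

lemma frob4 (r : ℕ) : ((1:R) + X)^(4^r) = 1 + X^(4^r) := by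
  have h : (4:ℕ)^r = 2^(2*r) := by rw [four_pow, two_mul, pow_add]
  rw [h, frob]

noncomputable def hpol (r : ℕ) : R :=
  (1+X)^(4^r - 1) + X^(2^r) * ∑ n ∈ Finset.range (2^r - 1), ((X:R)^(2^r) * (1+X))^n

lemma main_id (r : ℕ) :
    (1 + X + X ^ (2 ^ r) + X ^ (2 ^ r + 2)) * hpol r = 1 + X ^ (4 ^ r + 2 ^ r + 1) := by
  have hQ1 : 1 ≤ 2^r := Nat.one_le_two_pow
  have h41 : 1 ≤ 4^r := Nat.one_le_pow _ _ (by norm_num)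
  set A : R := (1+X)^(4^r - 1) with hA
  set S : R := ∑ n ∈ Finset.range (2^r - 1), ((X:R)^(2^r) * (1+X))^n with hS
  have e1 : (1+X) * A = 1 + X^(4^r) := by
    rw [hA, ← pow_succ', Nat.sub_add_cancel h41, frob4]
  have e2 : (1 + X^(2^r)*(1+X)) * S = 1 + (X^(2^r)*((1:R)+X))^(2^r - 1) := geom _ _
  have e3 : (X^(2^r)*((1:R)+X)) * (X^(2^r)*((1:R)+X))^(2^r - 1) = X^(4^r) * (1 + X^(2^r)) := by
    rw [← pow_succ', Nat.sub_add_cancel hQ1, mul_pow, ← pow_mul, frob, ← four_pow]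
  have e4 : (1 + X + X ^ (2 ^ r) + X ^ (2 ^ r + 2) : R) = (1+X) * (1 + X^(2^r)*(1+X)) := by
    linear_combination (-X^(2^r)*X : R) * two_zero
  rw [hpol, ← hA, ← hS]
  linear_combination (A + X^(2^r)*S) * e4 + (1 + X^(2^r)*((1:R)+X)) * e1
    + ((1:R)+X)*X^(2^r) * e2 + e3
    + (X^(4^r) + X^(2^r) + X^(2^r)*X + X^(2^r)*X^(4^r) : R) * two_zero

lemma parts (r : ℕ) : ∀ m, m ≤ 2^r →
    (∑ n ∈ range m, ((1:R)+X)^n * X^(2^r*(n+1))).support ⊆ range (2^r*(m+1)) ∧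
    (∑ n ∈ range m, ((1:R)+X)^n * X^(2^r*(n+1))).support.card = ∑ n ∈ range m, w n := by
  intro m
  induction m with
  | zero => simp
  | succ m ih =>
    intro hm
    obtain ⟨ihs, ihc⟩ := ih (Nat.le_of_succ_le hm)
    have hmulsucc1 : 2^r*(m+1+1) = 2^r*(m+1) + 2^r := by ring
    have hFs : (((1:R)+X)^m * X^(2^r*(m+1))).support ⊆
        Finset.Ico (2^r*(m+1)) (2^r*(m+1+1)) := by
      intro k hk
      rw [supp_mul_X_pow] at hk
      simp only [Finset.mem_image] at hk
      obtain ⟨a, ha, rfl⟩ := hk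
      have ham := supp_pow_sub m ha
      simp only [mem_range] at ham
      simp only [Finset.mem_Ico]
      omega
    have hdis : Disjoint (∑ n ∈ range m, ((1:R)+X)^n * X^(2^r*(n+1))).support
        ((((1:R)+X)^m * X^(2^r*(m+1))).support) := by
      rw [Finset.disjoint_left]
      intro k hk hk2
      have h1 := ihs hk
      have h2 := hFs hk2
      simp only [mem_range, Finset.mem_Ico] at h1 h2
      omega
    rw [sum_range_succ, supp_add_of_disjoint hdis]
    constructor
    · intro k hk
      simp only [Finset.mem_union] at hk
      simp only [mem_range]
      rcases hk with hk | hk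
      · have := ihs hk; simp only [mem_range] at this; omega
      · have := hFs hk; simp only [Finset.mem_Ico] at this; omega
    · rw [Finset.card_union_of_disjoint hdis, ihc, sum_range_succ, supp_mul_X_pow,
        Finset.card_image_of_injective _ (fun a b h => by omega), w]

lemma allones (N : ℕ) (hN : ∃ k, N = 2^k) : ((1:R)+X)^(N - 1) = ∑ k ∈ range N, (X:R)^k := by
  obtain ⟨j, rfl⟩ := hN
  have h1 : 1 ≤ (2:ℕ)^j := Nat.one_le_two_pow
  apply mul_left_cancel₀ onePlusX_ne
  rw [geom, ← pow_succ', Nat.sub_add_cancel h1, frob]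

lemma supp_ones (N : ℕ) : (∑ k ∈ range N, (X:R)^k).support = range N := by
  ext k
  rw [mem_support_iff, finset_sum_coeff]
  simp only [coeff_X_pow, Finset.sum_ite_eq, mem_range]
  by_cases hk : k < N
  · simp [hk]
  · simp [hk]

lemma card_hpol (r : ℕ) : (hpol r).support.card = 4 ^ r - 3 ^ r + 2 ^ r := by
  have hQ1 : 1 ≤ 2^r := Nat.one_le_two_pow
  have hsum_eq : (X:R)^(2^r) * ∑ n ∈ Finset.range (2^r - 1), ((X:R)^(2^r) * (1+X))^n
      = ∑ n ∈ range (2^r-1), ((1:R)+X)^n * X^(2^r*(n+1)) := by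
    rw [Finset.mul_sum]
    refine Finset.sum_congr rfl fun n _ => ?_
    rw [mul_pow, ← pow_mul]
    ring
  obtain ⟨hsub, hcard⟩ := parts r (2^r-1) (by omega)
  have hr4 : 2^r*((2^r-1)+1) = 4^r := by rw [Nat.sub_add_cancel hQ1, ← four_pow]
  rw [hr4] at hsub
  have h4k : ∃ k, (4:ℕ)^r = 2^k := ⟨2*r, by rw [four_pow, two_mul, pow_add]⟩
  have hsub2 : (∑ n ∈ range (2^r-1), ((1:R)+X)^n * X^(2^r*(n+1))).support ⊆
      (∑ k ∈ range (4^r), (X:R)^k).support := by rw [supp_ones]; exact hsub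
  rw [hpol, allones _ h4k, hsum_eq, supp_add_sdiff _ _ hsub2,
    Finset.card_sdiff_of_subset hsub2, supp_ones, card_range, hcard]
  have h3 := sum_w r
  rw [show 2^r = (2^r-1)+1 by omega, sum_range_succ] at h3
  rw [w_ones] at h3
  have h32 : (2:ℕ)^r ≤ 3^r := Nat.pow_le_pow_left (by norm_num) r
  have h43 : (3:ℕ)^r ≤ 4^r := Nat.pow_le_pow_left (by norm_num) r
  omega

theorem stmt_18 (r : ℕ) (hr : 3 ≤ r) (h : Polynomial (ZMod 2))
    (hh : (1 + X + X ^ (2 ^ r) + X ^ (2 ^ r + 2)) * h = 1 + X ^ (4 ^ r + 2 ^ r + 1)) :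
    h.support.card = 4 ^ r - 3 ^ r + 2 ^ r := by
  have hf : (1 + X + X ^ (2 ^ r) + X ^ (2 ^ r + 2) : R) ≠ 0 := by
    intro h0
    have h1 : ((1 + X + X ^ (2 ^ r) + X ^ (2 ^ r + 2) : R)).coeff 0 = 0 := by rw [h0]; simp
    have hQ1 : 1 ≤ 2^r := Nat.one_le_two_pow
    simp only [coeff_add, coeff_one, coeff_X_zero, coeff_X_pow] at h1
    rw [if_neg (show ¬(0 = 2^r) by omega), if_neg (show ¬(0 = 2^r+2) by omega)] at h1
    simp at h1
  have heq : h = hpol r := mul_left_cancel₀ hf (hh.trans (main_id r).symm)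
  rw [heq, card_hpol]
end
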